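/- For every k ≥ 1, as z → −1 in the slit plane, κ₁^{(k)}(z) = a_k + b_k(z)(1+z)^{3/2} where a_k = κ₁^{(k)}(−1) and lim_{z→−1} b_k(z) = (2√2/(3π)) · Π_{j=1}^{k−1} κ₁'(κ₁^{(j)}(−1)) > 0. -/

import Mathlib

open Real Complex Filter

/-- The slit plane `ℂ \ [1,∞) \ (−∞,−1]`. -/
def Dslit : Set ℂ := {z : ℂ | ¬(z.im = 0 ∧ (1 ≤ z.re ∨ z.re ≤ -1))}

/-- Analytic extension of the degree-1 arc-cosine kernel to the slit plane. -/
noncomputable def K1C (z : ℂ) : ℂ :=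
  (z * ((Real.pi : ℂ) + Complex.I * Complex.log (z + Complex.I * ((1 - z ^ 2) ^ ((1 : ℂ) / 2))))
    + (1 - z ^ 2) ^ ((1 : ℂ) / 2)) / (Real.pi : ℂ)

/-- The degree-0 arc-cosine kernel κ₀ = κ₁' on [-1,1]. -/
noncomputable def k0Real (u : ℝ) : ℝ := (Real.pi - Real.arccos u) / Real.pi

/-- The degree-1 arc-cosine kernel on [-1,1]. -/
noncomputable def k1Real (u : ℝ) : ℝ :=
  (u * (Real.pi - Real.arccos u) + Real.sqrt (1 - u ^ 2)) / Real.pi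

/-!
Put `t = π + i log(z + i√(1 - z²))`. Then `cos t = -z` and `sin t = √(1 - z²)`, so
`π κ₁(z) = sin t - t cos t` and `1 + z = 2 sin²(t/2)`. Since `z + i√(1 - z²)` lies in the
closed upper half plane, `t → 0` as `z → -1`, and on the slit plane `0 < Re t ≤ π`, so that
`(1 + z)^{3/2} = (√2 sin(t/2))³` on the principal branch. The expansion
`sin t - t cos t = t³/3 + O(t⁵)` then gives `κ₁(z) / (1 + z)^{3/2} → 2√2/(3π)`.

On `(-1, 1)`, `t = π - arccos x` is real, `κ₁` restricts to the real kernel, and `-cos`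
inverts `t` with derivative `sin t ≠ 0`, whence `κ₁' = t/π = κ₀`. As `κ₁(-1) = 0` and the
orbit of `0` stays in `[0, 1)`, the chain rule along that orbit applied to
`κ₁^{(k)}(z) - κ₁^{(k)}(-1) = κ₁^{(k-1)}(κ₁ z) - κ₁^{(k-1)}(0)` gives the limit.
-/

open Topology

lemma tendsto_comp_sub_div_of_hasDerivAt {𝕜 α : Type*} [NontriviallyNormedField 𝕜]
    {l : Filter α} {f w : α → 𝕜} {g : 𝕜 → 𝕜} {a c d : 𝕜} (hg : HasDerivAt g d a)
    (hf : Tendsto f l (𝓝[≠] a)) (hfw : Tendsto (fun x => (f x - a) / w x) l (𝓝 c)) :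
    Tendsto (fun x => (g (f x) - g a) / w x) l (𝓝 (d * c)) := by
  refine ((hg.tendsto_slope.comp hf).mul hfw).congr' ?_
  filter_upwards [hf self_mem_nhdsWithin] with x hx
  rw [Function.comp_apply, slope_def_field, div_mul_div_cancel₀ (sub_ne_zero.2 hx)]

noncomputable def sqrtOneSubSq (z : ℂ) : ℂ := (1 - z ^ 2) ^ ((1 : ℂ) / 2)

noncomputable def k1Angle (z : ℂ) : ℂ := π + I * log (z + I * sqrtOneSubSq z)

lemma sqrtOneSubSq_sq (z : ℂ) : sqrtOneSubSq z ^ 2 = 1 - z ^ 2 := by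
  simp [sqrtOneSubSq, one_div]

lemma re_sqrtOneSubSq_nonneg (z : ℂ) : 0 ≤ (sqrtOneSubSq z).re := by
  rw [sqrtOneSubSq, one_div, cpow_inv_two_re]
  exact Real.sqrt_nonneg _

lemma sub_I_mul_sqrtOneSubSq_mul_add (z : ℂ) :
    (z - I * sqrtOneSubSq z) * (z + I * sqrtOneSubSq z) = 1 := by
  linear_combination (-sqrtOneSubSq z ^ 2) * I_sq + sqrtOneSubSq_sq z

lemma add_I_mul_sqrtOneSubSq_ne_zero (z : ℂ) : z + I * sqrtOneSubSq z ≠ 0 :=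
  right_ne_zero_of_mul_eq_one (sub_I_mul_sqrtOneSubSq_mul_add z)

/-- With `s = a + bi = √(1 - z²)`, `a ≥ 0`: if `Im z + a < 0`, then `ab = -Re z Im z` forces
`b² ≥ (Re z)²`, and `a² - b² = 1 - (Re z)² + (Im z)²` then gives `a² > (Im z)²`. -/
lemma im_add_I_mul_sqrtOneSubSq_nonneg (z : ℂ) : 0 ≤ (z + I * sqrtOneSubSq z).im := by
  have hsq := congrArg (fun w => (w.re, w.im)) (sqrtOneSubSq_sq z)
  simp only [sq, mul_re, mul_im, sub_re, sub_im, one_re, one_im, Prod.mk.injEq] at hsq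
  obtain ⟨hre, him⟩ := hsq
  have ha := re_sqrtOneSubSq_nonneg z
  simp only [add_im, mul_im, I_re, I_im, zero_mul, one_mul, zero_add]
  set a := (sqrtOneSubSq z).re
  set b := (sqrtOneSubSq z).im
  by_contra! h
  have ha2 : a ^ 2 < z.im ^ 2 := by nlinarith
  have hab : a ^ 2 * b ^ 2 = z.re ^ 2 * z.im ^ 2 := by
    linear_combination (a * b - z.re * z.im) * him / 2
  have hbx : z.re ^ 2 ≤ b ^ 2 := by
    by_contra! hbx
    have : a ^ 2 * b ^ 2 ≤ a ^ 2 * z.re ^ 2 := by gcongr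
    nlinarith [mul_pos (lt_of_le_of_lt (sq_nonneg b) hbx) (sub_pos.2 ha2)]
  nlinarith

lemma exp_neg_log_add_I_mul_sqrtOneSubSq (z : ℂ) :
    exp (-log (z + I * sqrtOneSubSq z)) = z - I * sqrtOneSubSq z := by
  rw [Complex.exp_neg, exp_log (add_I_mul_sqrtOneSubSq_ne_zero z)]
  exact (eq_inv_of_mul_eq_one_left (sub_I_mul_sqrtOneSubSq_mul_add z)).symm

lemma k1Angle_eq (z : ℂ) : k1Angle z = log (z + I * sqrtOneSubSq z) * I + π := by
  rw [k1Angle]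
  ring

lemma cos_k1Angle (z : ℂ) : cos (k1Angle z) = -z := by
  have h2 := two_cosh (log (z + I * sqrtOneSubSq z))
  rw [exp_log (add_I_mul_sqrtOneSubSq_ne_zero z), exp_neg_log_add_I_mul_sqrtOneSubSq] at h2
  rw [k1Angle_eq, Complex.cos_add_pi, cos_mul_I]
  linear_combination -h2 / 2

lemma sin_k1Angle (z : ℂ) : sin (k1Angle z) = sqrtOneSubSq z := by
  have h2 := two_sinh (log (z + I * sqrtOneSubSq z))
  rw [exp_log (add_I_mul_sqrtOneSubSq_ne_zero z), exp_neg_log_add_I_mul_sqrtOneSubSq] at h2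
  rw [k1Angle_eq, Complex.sin_add_pi, sin_mul_I]
  linear_combination (-I / 2) * h2 - sqrtOneSubSq z * I_sq

lemma K1C_eq_sin_sub_mul_cos (z : ℂ) :
    K1C z = (sin (k1Angle z) - k1Angle z * cos (k1Angle z)) / π := by
  rw [sin_k1Angle, cos_k1Angle, K1C, k1Angle, sqrtOneSubSq]
  ring

lemma one_add_eq_sq_sin_half_k1Angle (z : ℂ) :
    1 + z = ((√2 : ℝ) * sin (k1Angle z / 2)) ^ 2 := by
  have hcos : cos (k1Angle z) = 1 - 2 * sin (k1Angle z / 2) ^ 2 := by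
    rw [show k1Angle z = 2 * (k1Angle z / 2) by ring, Complex.cos_two_mul, Complex.cos_sq']
    ring_nf
  have hsqrt : ((√2 : ℝ) : ℂ) ^ 2 = 2 := by
    rw [← ofReal_pow, Real.sq_sqrt zero_le_two, ofReal_ofNat]
  rw [mul_pow, hsqrt]
  linear_combination cos_k1Angle z - hcos

lemma ne_neg_one_of_mem_Dslit {z : ℂ} (hz : z ∈ Dslit) : z ≠ -1 := by
  rintro rfl
  exact hz ⟨by simp, Or.inr (by simp)⟩

lemma re_k1Angle (z : ℂ) : (k1Angle z).re = π - arg (z + I * sqrtOneSubSq z) := by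
  simp [k1Angle, log_im, sub_eq_add_neg]

lemma re_k1Angle_le_pi (z : ℂ) : (k1Angle z).re ≤ π := by
  rw [re_k1Angle]
  linarith [arg_nonneg_iff.2 (im_add_I_mul_sqrtOneSubSq_nonneg z)]

/-- If `z + i√(1 - z²) = r` were a negative real, then `z = (r + r⁻¹)/2 ≤ -1` would lie on the
cut. -/
lemma re_k1Angle_pos {z : ℂ} (hz : z ∈ Dslit) : 0 < (k1Angle z).re := by
  rw [re_k1Angle, sub_pos]
  refine (arg_le_pi _).lt_of_ne fun hπ => hz ?_
  obtain ⟨hre, him⟩ := arg_eq_pi_iff.1 hπ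
  set r := (z + I * sqrtOneSubSq z).re
  have hr : z + I * sqrtOneSubSq z = r := ext rfl (by simp [him])
  have hzr : z = ((r + r⁻¹) / 2 : ℝ) := by
    have hinv := eq_inv_of_mul_eq_one_left (sub_I_mul_sqrtOneSubSq_mul_add z)
    rw [hr] at hinv
    push_cast
    linear_combination hr / 2 + hinv / 2
  have hrr : r * r⁻¹ = 1 := mul_inv_cancel₀ hre.ne
  refine ⟨by rw [hzr, ofReal_im], Or.inr ?_⟩
  rw [hzr, ofReal_re]
  nlinarith [sq_nonneg (r + 1), inv_lt_zero.2 hre]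

lemma tendsto_cpow_const_zero {w : ℂ} (hw : 0 < w.re) :
    Tendsto (fun x : ℂ => x ^ w) (𝓝 0) (𝓝 0) := by
  simpa [zero_cpow (ne_zero_of_re_pos hw)] using
    (continuousAt_cpow_const_of_re_pos (z := 0) (by simp) hw).tendsto

lemma tendsto_sqrtOneSubSq : Tendsto sqrtOneSubSq (𝓝 (-1)) (𝓝 0) := by
  have h : Tendsto (fun z : ℂ => 1 - z ^ 2) (𝓝 (-1)) (𝓝 (1 - (-1) ^ 2)) :=
    (continuous_const.sub (continuous_pow 2)).tendsto (-1)
  rw [show (1 : ℂ) - (-1) ^ 2 = 0 by norm_num] at h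
  exact (tendsto_cpow_const_zero (by norm_num)).comp h

lemma tendsto_k1Angle : Tendsto k1Angle (𝓝[Dslit] (-1)) (𝓝[≠] 0) := by
  have hw :
      Tendsto (fun z => z + I * sqrtOneSubSq z) (𝓝 (-1)) (𝓝[{w | 0 ≤ w.im}] (-1)) := by
    refine tendsto_nhdsWithin_iff.2 ⟨?_, Eventually.of_forall im_add_I_mul_sqrtOneSubSq_nonneg⟩
    simpa using tendsto_id.add (tendsto_const_nhds.mul tendsto_sqrtOneSubSq)
  have hlog := (tendsto_log_nhdsWithin_im_nonneg_of_re_neg_of_im_zero (z := -1)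
    (by norm_num) (by norm_num)).comp hw
  have ht : Tendsto k1Angle (𝓝 (-1)) (𝓝 (π + I * (Real.log ‖(-1 : ℂ)‖ + π * I))) :=
    tendsto_const_nhds.add (tendsto_const_nhds.mul hlog)
  refine tendsto_nhdsWithin_iff.2 ⟨?_, eventually_nhdsWithin_of_forall fun z hz => ?_⟩
  · convert ht.mono_left nhdsWithin_le_nhds using 2
    simp only [norm_neg, norm_one, Real.log_one, ofReal_zero, zero_add]
    linear_combination -(π : ℂ) * I_sq
  · exact fun h0 => (re_k1Angle_pos hz).ne' (by rw [Set.mem_singleton_iff.1 h0, zero_re])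

lemma re_sin_pos {w : ℂ} (h0 : 0 < w.re) (hπ : w.re < π) : 0 < (sin w).re := by
  have hre : (sin w).re = Real.sin w.re * Real.cosh w.im := by
    rw [Complex.sin_eq]
    simp [← ofReal_sin, ← ofReal_cos, ← ofReal_cosh, ← ofReal_sinh]
  rw [hre]
  exact mul_pos (Real.sin_pos_of_pos_of_lt_pi h0 hπ) (Real.cosh_pos w.im)

lemma one_add_cpow_three_halves {z : ℂ} (hz : z ∈ Dslit) :
    (1 + z) ^ ((3 : ℂ) / 2) = ((√2 : ℝ) * sin (k1Angle z / 2)) ^ 3 := by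
  have hre : 0 < ((√2 : ℝ) * sin (k1Angle z / 2)).re := by
    have h0 := re_k1Angle_pos hz
    have hπ := re_k1Angle_le_pi z
    rw [re_ofReal_mul]
    refine mul_pos (by positivity) (re_sin_pos ?_ ?_) <;>
      simp only [div_ofNat_re] <;> linarith [Real.pi_pos]
  rw [one_add_eq_sq_sin_half_k1Angle, show (3 : ℂ) / 2 = 3 * 2⁻¹ by norm_num, cpow_ofNat_mul,
    sq_cpow_two_inv hre]

lemma K1C_div_one_add_cpow {z : ℂ} (hz : z ∈ Dslit) :
    K1C z / (1 + z) ^ ((3 : ℂ) / 2) = (sin (k1Angle z) - k1Angle z * cos (k1Angle z)) /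
      (π * ((√2 : ℝ) * sin (k1Angle z / 2)) ^ 3) := by
  rw [K1C_eq_sin_sub_mul_cos, one_add_cpow_three_halves hz, div_div]

lemma norm_sin_sub_mul_cos_sub_le {t : ℂ} (ht : ‖t‖ ≤ 1) :
    ‖sin t - t * cos t - t ^ 3 / 3‖ ≤ ‖t‖ ^ 5 := by
  have hsplit : sin t - t * cos t - t ^ 3 / 3 =
      (sin t - (t - t ^ 3 / 6)) - t * (cos t - (1 - t ^ 2 / 2)) := by ring
  calc ‖sin t - t * cos t - t ^ 3 / 3‖
      ≤ ‖sin t - (t - t ^ 3 / 6)‖ + ‖t‖ * ‖cos t - (1 - t ^ 2 / 2)‖ := by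
        rw [hsplit, ← norm_mul]; exact norm_sub_le _ _
    _ ≤ ‖t‖ ^ 5 / 100 + ‖t‖ * (‖t‖ ^ 4 * (5 / 96)) := by
        gcongr; exacts [Complex.sin_bound ht, Complex.cos_bound ht]
    _ ≤ ‖t‖ ^ 5 := by nlinarith [pow_nonneg (norm_nonneg t) 5]

lemma tendsto_sin_sub_mul_cos_div_cube :
    Tendsto (fun t : ℂ => (sin t - t * cos t) / t ^ 3) (𝓝[≠] 0) (𝓝 (1 / 3)) := by
  rw [tendsto_iff_norm_sub_tendsto_zero]
  have hsq : Tendsto (fun t : ℂ => ‖t‖ ^ 2) (𝓝[≠] 0) (𝓝 0) :=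
    ((continuous_norm.pow 2).tendsto' 0 0 (by simp)).mono_left nhdsWithin_le_nhds
  refine squeeze_zero' (Eventually.of_forall fun _ => norm_nonneg _) ?_ hsq
  filter_upwards [self_mem_nhdsWithin,
    nhdsWithin_le_nhds (Metric.closedBall_mem_nhds (0 : ℂ) one_pos)] with t ht0 ht1
  have ht3 : t ^ 3 ≠ 0 := pow_ne_zero 3 ht0
  rw [show (sin t - t * cos t) / t ^ 3 - 1 / 3 = (sin t - t * cos t - t ^ 3 / 3) / t ^ 3 by
    rw [div_sub' ht3]; ring_nf, norm_div, div_le_iff₀ (norm_pos_iff.2 ht3), norm_pow, ← pow_add]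
  exact norm_sin_sub_mul_cos_sub_le (mem_closedBall_zero_iff.1 ht1)

lemma tendsto_sin_half_div :
    Tendsto (fun t : ℂ => sin (t / 2) / t) (𝓝[≠] 0) (𝓝 (1 / 2)) := by
  have h : HasDerivAt (fun t : ℂ => sin (t / 2)) (1 / 2) 0 := by
    simpa using ((hasDerivAt_id (0 : ℂ)).div_const 2).csin
  convert h.tendsto_slope using 1
  ext t
  simp [slope_def_field]

lemma tendsto_sin_sub_mul_cos_div_sin_half_cube :
    Tendsto (fun t : ℂ => (sin t - t * cos t) / (π * ((√2 : ℝ) * sin (t / 2)) ^ 3))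
      (𝓝[≠] 0) (𝓝 ((2 * √2 / (3 * π) : ℝ) : ℂ)) := by
  have hsqrt : ((√2 : ℝ) : ℂ) ^ 2 = 2 := by
    rw [← ofReal_pow, Real.sq_sqrt zero_le_two, ofReal_ofNat]
  have hπ : (π : ℂ) ≠ 0 := ofReal_ne_zero.2 Real.pi_ne_zero
  have hne : (π : ℂ) * ((√2 : ℝ) * (1 / 2)) ^ 3 ≠ 0 := by
    have : ((√2 : ℝ) : ℂ) ≠ 0 := ofReal_ne_zero.2 (by positivity)
    simp [hπ, this]
  have h := tendsto_sin_sub_mul_cos_div_cube.div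
    (tendsto_const_nhds.mul ((tendsto_const_nhds.mul tendsto_sin_half_div).pow 3)) hne
  convert h.congr' ?_ using 2
  · push_cast
    field_simp
    linear_combination (((√2 : ℝ) : ℂ) ^ 2 + 2) * hsqrt
  · filter_upwards [self_mem_nhdsWithin] with t ht
    rw [Pi.div_apply, mul_div_assoc', div_pow, mul_div_assoc',
      div_div_div_cancel_right₀ (pow_ne_zero 3 ht)]

lemma tendsto_K1C_div_one_add_cpow :
    Tendsto (fun z => K1C z / (1 + z) ^ ((3 : ℂ) / 2)) (𝓝[Dslit] (-1))
      (𝓝 ((2 * √2 / (3 * π) : ℝ) : ℂ)) :=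
  (tendsto_sin_sub_mul_cos_div_sin_half_cube.comp tendsto_k1Angle).congr'
    (eventually_nhdsWithin_of_forall fun _ hz => (K1C_div_one_add_cpow hz).symm)

lemma sqrtOneSubSq_ofReal {x : ℝ} (hx : x ∈ Set.Icc (-1) 1) :
    sqrtOneSubSq x = (√(1 - x ^ 2) : ℝ) := by
  have hnn : (0 : ℝ) ≤ 1 - x ^ 2 := by nlinarith [hx.1, hx.2]
  rw [sqrtOneSubSq, show (1 : ℂ) - (x : ℂ) ^ 2 = ((1 - x ^ 2 : ℝ) : ℂ) by push_cast; ring,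
    show (1 : ℂ) / 2 = ((1 / 2 : ℝ) : ℂ) by norm_num, ← ofReal_cpow hnn, Real.sqrt_eq_rpow]

lemma log_ofReal_add_I_mul_sqrt {x : ℝ} (hx : x ∈ Set.Icc (-1) 1) :
    log (x + I * (√(1 - x ^ 2) : ℝ)) = arccos x * I := by
  have hform :
      (x : ℂ) + I * (√(1 - x ^ 2) : ℝ) = cos (arccos x : ℂ) + sin (arccos x : ℂ) * I := by
    rw [← ofReal_cos, ← ofReal_sin, Real.cos_arccos hx.1 hx.2, Real.sin_arccos]
    ring
  rw [hform, Complex.log, norm_cos_add_sin_mul_I, arg_cos_add_sin_mul_I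
    ⟨by linarith [Real.arccos_nonneg x, Real.pi_pos], Real.arccos_le_pi x⟩]
  simp

lemma k1Angle_ofReal {x : ℝ} (hx : x ∈ Set.Icc (-1) 1) :
    k1Angle x = ((π - arccos x : ℝ) : ℂ) := by
  rw [k1Angle, sqrtOneSubSq_ofReal hx, log_ofReal_add_I_mul_sqrt hx]
  push_cast
  linear_combination (arccos x : ℂ) * I_sq

lemma K1C_ofReal {x : ℝ} (hx : x ∈ Set.Icc (-1) 1) : K1C x = k1Real x := by
  rw [K1C_eq_sin_sub_mul_cos, sin_k1Angle, cos_k1Angle, sqrtOneSubSq_ofReal hx,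
    k1Angle_ofReal hx, k1Real]
  push_cast
  ring

lemma k1Real_neg_one : k1Real (-1) = 0 := by
  simp [k1Real, Real.arccos_neg_one]

lemma K1C_neg_one : K1C (-1) = 0 := by
  simpa [k1Real_neg_one] using K1C_ofReal (x := -1) (by norm_num)

/-- With `θ = arccos x ∈ (0, π/2]`, `π κ₁(x) = x(π - θ) + sin θ < π` because `sin θ ≤ θ`. -/
lemma mapsTo_k1Real : Set.MapsTo k1Real (Set.Ico 0 1) (Set.Ico 0 1) := by
  rintro x ⟨hx0, hx1⟩
  have hθpos : 0 < arccos x := Real.arccos_pos.2 hx1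
  have hθle : arccos x ≤ π / 2 := Real.arccos_le_pi_div_two.2 hx0
  have hsin : √(1 - x ^ 2) = Real.sin (arccos x) := (Real.sin_arccos x).symm
  have hsinle : Real.sin (arccos x) ≤ arccos x := Real.sin_le hθpos.le
  have hsin0 : 0 ≤ √(1 - x ^ 2) := Real.sqrt_nonneg _
  constructor
  · exact div_nonneg (by nlinarith [Real.pi_pos]) Real.pi_pos.le
  · rw [k1Real, div_lt_one Real.pi_pos, hsin]
    nlinarith [Real.pi_pos]

lemma iterate_k1Real_zero_mem_Ioo (j : ℕ) : k1Real^[j] 0 ∈ Set.Ioo (-1) 1 := by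
  have h := mapsTo_k1Real.iterate j ⟨le_rfl, zero_lt_one⟩
  exact ⟨by linarith [h.1], h.2⟩

lemma k0Real_pos {x : ℝ} (hx : -1 < x) : 0 < k0Real x :=
  div_pos (sub_pos.2 (Real.arccos_lt_pi.2 hx)) Real.pi_pos

lemma continuousAt_k1Angle {x : ℝ} (hx : x ∈ Set.Ioo (-1) 1) : ContinuousAt k1Angle x := by
  have hpos : (0 : ℝ) < 1 - x ^ 2 := by nlinarith [hx.1, hx.2]
  have hs : ContinuousAt sqrtOneSubSq x :=
    (continuousAt_cpow_const_of_re_pos (Or.inl (by simpa [← ofReal_pow] using hpos.le))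
      (by norm_num)).comp (continuous_const.sub (continuous_pow 2)).continuousAt
  have hslit : (x : ℂ) + I * sqrtOneSubSq x ∈ slitPlane := by
    rw [sqrtOneSubSq_ofReal (Set.Ioo_subset_Icc_self hx), mem_slitPlane_iff]
    right
    simpa using (Real.sqrt_pos.2 hpos).ne'
  exact continuousAt_const.add
    (continuousAt_const.mul ((continuousAt_id.add (continuousAt_const.mul hs)).clog hslit))

/-- `k1Angle` is a local right inverse of `-cos`, whose derivative `sin` does not vanish. -/
lemma hasDerivAt_k1Angle {x : ℝ} (hx : x ∈ Set.Ioo (-1) 1) :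
    HasDerivAt k1Angle ((√(1 - x ^ 2) : ℝ) : ℂ)⁻¹ x := by
  have hpos : (0 : ℝ) < √(1 - x ^ 2) := Real.sqrt_pos.2 (by nlinarith [hx.1, hx.2])
  have hsin : sin (k1Angle x) = (√(1 - x ^ 2) : ℝ) := by
    rw [sin_k1Angle, sqrtOneSubSq_ofReal (Set.Ioo_subset_Icc_self hx)]
  refine HasDerivAt.of_local_left_inverse (f := fun t : ℂ => -cos t) (continuousAt_k1Angle hx) ?_
    (ofReal_ne_zero.2 hpos.ne') (Eventually.of_forall fun z => by simp [cos_k1Angle])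
  have h := (hasDerivAt_cos (k1Angle x)).neg
  rwa [neg_neg, hsin] at h

lemma hasDerivAt_K1C {x : ℝ} (hx : x ∈ Set.Ioo (-1) 1) : HasDerivAt K1C (k0Real x) x := by
  have hF (t : ℂ) : HasDerivAt (fun u : ℂ => (sin u - u * cos u) / π) (t * sin t / π) t := by
    refine (((hasDerivAt_sin t).sub ((hasDerivAt_id t).mul (hasDerivAt_cos t))).div_const
      (π : ℂ)).congr_deriv ?_
    simp only [id, one_mul]
    ring
  rw [show K1C = (fun u : ℂ => (sin u - u * cos u) / π) ∘ k1Angle from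
    funext K1C_eq_sin_sub_mul_cos]
  refine ((hF (k1Angle x)).comp (x : ℂ) (hasDerivAt_k1Angle hx)).congr_deriv ?_
  have hsqrt : ((√(1 - x ^ 2) : ℝ) : ℂ) ≠ 0 :=
    ofReal_ne_zero.2 (Real.sqrt_pos.2 (by nlinarith [hx.1, hx.2])).ne'
  have hπ : (π : ℂ) ≠ 0 := ofReal_ne_zero.2 Real.pi_ne_zero
  rw [sin_k1Angle, sqrtOneSubSq_ofReal (Set.Ioo_subset_Icc_self hx),
    k1Angle_ofReal (Set.Ioo_subset_Icc_self hx), k0Real]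
  push_cast
  field_simp

lemma iterate_K1C_zero (m : ℕ) : K1C^[m] 0 = (k1Real^[m] 0 : ℝ) := by
  induction m with
  | zero => simp
  | succ n ih =>
    rw [Function.iterate_succ_apply', Function.iterate_succ_apply', ih,
      K1C_ofReal (Set.Ioo_subset_Icc_self (iterate_k1Real_zero_mem_Ioo n))]

lemma hasDerivAt_iterate_K1C_zero (m : ℕ) :
    HasDerivAt K1C^[m] (∏ j ∈ Finset.range m, k0Real (k1Real^[j] 0) : ℝ) 0 := by
  induction m with
  | zero => simpa using hasDerivAt_id (0 : ℂ)
  | succ n ih =>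
    have hK := hasDerivAt_K1C (iterate_k1Real_zero_mem_Ioo n)
    rw [← iterate_K1C_zero] at hK
    rw [Function.iterate_succ', Finset.prod_range_succ, ofReal_mul, mul_comm]
    exact hK.comp 0 ih

lemma tendsto_K1C_nhdsNE : Tendsto K1C (𝓝[Dslit] (-1)) (𝓝[≠] 0) := by
  have hq := tendsto_K1C_div_one_add_cpow
  have hw : Tendsto (fun z : ℂ => (1 + z) ^ ((3 : ℂ) / 2)) (𝓝[Dslit] (-1)) (𝓝 0) := by
    have h : Tendsto (fun z : ℂ => 1 + z) (𝓝[Dslit] (-1)) (𝓝 0) :=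
      ((by fun_prop : Continuous fun z : ℂ => 1 + z).tendsto' (-1) 0 (by norm_num)).mono_left
        nhdsWithin_le_nhds
    exact (tendsto_cpow_const_zero (by norm_num)).comp h
  have hw0 : ∀ᶠ z in 𝓝[Dslit] (-1), (1 + z) ^ ((3 : ℂ) / 2) ≠ 0 :=
    eventually_nhdsWithin_of_forall fun z hz h0 => ne_neg_one_of_mem_Dslit hz
      (eq_neg_of_add_eq_zero_right ((cpow_eq_zero_iff _ _).1 h0).1)
  refine tendsto_nhdsWithin_iff.2 ⟨?_, ?_⟩
  · simpa using (hq.mul hw).congr' (hw0.mono fun z hz => div_mul_cancel₀ _ hz)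
  · filter_upwards [hq.eventually_ne (ofReal_ne_zero.2 (by positivity))] with z hz h0
    exact hz (by rw [Set.mem_singleton_iff.1 h0, zero_div])

theorem k1_iterate_expansion_at_minus_one (k : ℕ) (hk : 1 ≤ k) :
    (0 : ℝ) < (2 * Real.sqrt 2 / (3 * Real.pi)) *
        ∏ j ∈ Finset.range (k - 1), k0Real (k1Real^[j + 1] (-1)) ∧
    Tendsto (fun z : ℂ => (K1C^[k] z - K1C^[k] (-1)) / ((1 + z) ^ ((3 : ℂ) / 2)))
      (nhdsWithin (-1) Dslit)
      (nhds (((2 * Real.sqrt 2 / (3 * Real.pi)) *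
        ∏ j ∈ Finset.range (k - 1), k0Real (k1Real^[j + 1] (-1)) : ℝ) : ℂ)) := by
  obtain ⟨m, rfl⟩ : ∃ m, k = m + 1 := ⟨k - 1, by omega⟩
  simp only [Nat.add_sub_cancel, Function.iterate_succ_apply, k1Real_neg_one, K1C_neg_one]
  refine ⟨mul_pos (by positivity)
    (Finset.prod_pos fun j _ => k0Real_pos (iterate_k1Real_zero_mem_Ioo j).1), ?_⟩
  have h := tendsto_comp_sub_div_of_hasDerivAt (hasDerivAt_iterate_K1C_zero m)
    tendsto_K1C_nhdsNE (by simpa only [sub_zero] using tendsto_K1C_div_one_add_cpow)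
  rw [ofReal_mul, mul_comm]
  exact h
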